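/- arXiv:2302.02960 — 2 statements merged into one kernel-verified Lean document; each statement's English description precedes it below -/
import Mathlib

section
/- With the notation of the previous statement, listing the reversed split sizes as (g_1',…,g_m') and reversed block counts (k_0',…,k_m'), the total number of splitting sequences of {1,…,k} with ordered split sizes (g_1,…,g_m) equals Π_{i=1}^m C(k_i', g_i'), the product of binomial coefficients, where going backwards each step merges g_i' of the existing k_i' blocks into one. -/
/-!
Read a splitting sequence backwards: each step merges `g` of the current blocks into one.
Conversely, any choice of `h ≥ 2` blocks of a partition `R` is merged by exactly one partition
`Q` that splits into `R`, so `R` has `C(#R, h)` predecessors, however `R` looks. Along a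
sequence ending at the partition into singletons, the number of blocks after step `i` is forced
to be `1 + ∑_{j ≤ i} (g_j - 1)`, so the number of sequences is the product of these binomial
coefficients. Counting blocks also forces the first partition to be the one-block partition.
-/

open Finset

lemma Fin.apply_last_eq_apply_zero_add_sum {m : ℕ} (f : Fin (m + 1) → ℕ) (d : Fin m → ℕ)
    (h : ∀ i, f i.succ = f i.castSucc + d i) : f (Fin.last m) = f 0 + ∑ i, d i := by
  induction m with
  | zero => simp
  | succ m ih =>
    have hinit : f (Fin.last m).castSucc = f 0 + ∑ i : Fin m, d i.castSucc :=
      ih (fun i => f i.castSucc) (fun i => d i.castSucc) fun i => by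
        simpa [Fin.succ_castSucc, -Fin.castSucc_succ] using h i.castSucc
    rw [Fin.sum_univ_castSucc, ← add_assoc, ← hinit, ← h, Fin.succ_last]

section Chain

variable {α : Type*} {m : ℕ}

abbrev ChainTo (r : Fin m → α → α → Prop) (a : α) : Type _ :=
  {β : Fin (m + 1) → α // β (Fin.last m) = a ∧ ∀ i, r i (β i.castSucc) (β i.succ)}

lemma card_chainTo_zero (r : Fin 0 → α → α → Prop) (a : α) : Nat.card (ChainTo r a) = 1 :=
  Nat.card_eq_one_iff_exists.2 ⟨⟨fun _ => a, rfl, finZeroElim⟩, fun ⟨β, hβ, _⟩ =>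
    Subtype.ext <| funext fun i => (Subsingleton.elim (α := Fin 1) i (Fin.last 0)) ▸ hβ⟩

def chainToSuccEquiv (r : Fin (m + 1) → α → α → Prop) (a : α) :
    ChainTo r a ≃ Σ q : {q // r (Fin.last m) q a}, ChainTo (fun i : Fin m => r i.castSucc) q.1 where
  toFun β := ⟨⟨β.1 (Fin.last m).castSucc, by simpa [β.2.1] using β.2.2 (Fin.last m)⟩,
    ⟨Fin.init β.1, rfl, fun i => by simpa [Fin.init] using β.2.2 i.castSucc⟩⟩
  invFun γ := ⟨Fin.snoc γ.2.1 a, by simp, fun i => by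
    induction i using Fin.lastCases with
    | last => simpa [γ.2.2.1] using γ.1.2
    | cast i => simpa [Fin.succ_castSucc, -Fin.castSucc_succ] using γ.2.2.2 i⟩
  left_inv β := Subtype.ext <| by
    simpa only [← β.2.1] using Fin.snoc_init_self β.1
  right_inv γ := Sigma.subtype_ext (Subtype.ext (by simpa using γ.2.2.1)) (by simp)

end Chain

namespace Finpartition

section Lattice

variable {α : Type*} [Lattice α] [OrderBot α] {a : α}

lemma sup_id_notMem_parts {R : Finpartition a} {S : Finset α} (hS : S ⊆ R.parts)
    (hc : 1 < #S) : S.sup id ∉ R.parts := by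
  intro hmem
  have hsup : ∀ t ∈ S, t = S.sup id := fun t ht => by_contra fun hne =>
    R.ne_bot (hS ht) <| (R.disjoint (hS ht) hmem hne).eq_bot_of_le (le_sup (f := id) ht)
  obtain ⟨s, hs, s', hs', hss'⟩ := one_lt_card.1 hc
  exact hss' ((hsup s hs).trans (hsup s' hs').symm)

lemma parts_eq_singleton_of_card_parts_eq_one {P : Finpartition a} (h : #P.parts = 1) :
    P.parts = {a} := by
  obtain ⟨b, hb⟩ := card_eq_one.1 h
  have hsup := P.sup_parts
  rw [hb, sup_singleton] at hsup
  rw [hb, ← hsup, id]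

variable [DecidableEq α]

def SplitStep (h : ℕ) (Q R : Finpartition a) : Prop :=
  ∃ b ∈ Q.parts, ∃ P : Finpartition b, #P.parts = h ∧ R.parts = Q.parts.erase b ∪ P.parts

lemma disjoint_parts_erase {Q : Finpartition a} {b : α} (hb : b ∈ Q.parts) (P : Finpartition b) :
    Disjoint (Q.parts.erase b) P.parts := by
  refine Finset.disjoint_left.2 fun t ht htP => P.ne_bot htP ?_
  have hQ := Finset.mem_erase.1 ht
  exact (Q.disjoint hQ.2 hb hQ.1).eq_bot_of_le (P.le htP)

lemma SplitStep.card_parts {h : ℕ} {Q R : Finpartition a} (hs : SplitStep h Q R) :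
    #R.parts + 1 = #Q.parts + h := by
  obtain ⟨b, hb, P, rfl, hR⟩ := hs
  rw [hR, card_union_of_disjoint (disjoint_parts_erase hb P), card_erase_of_mem hb]
  have := card_pos.2 ⟨b, hb⟩
  omega

lemma SplitStep.card_parts_last {m : ℕ} {g : Fin m → ℕ} (hg : ∀ i, 1 ≤ g i)
    {β : Fin (m + 1) → Finpartition a} (hβ : ∀ i, SplitStep (g i) (β i.castSucc) (β i.succ)) :
    #(β (Fin.last m)).parts = #(β 0).parts + ∑ i, (g i - 1) :=
  Fin.apply_last_eq_apply_zero_add_sum (fun i => #(β i).parts) (fun i => g i - 1) fun i => by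
    have := (hβ i).card_parts
    have := hg i
    omega

end Lattice

section DistribLattice

variable {α : Type*} [DistribLattice α] [OrderBot α] [DecidableEq α] {a : α}

def mergeParts (R : Finpartition a) (S : Finset α) (hS : S ⊆ R.parts) (hne : S.Nonempty) :
    Finpartition a where
  parts := R.parts \ S ∪ {S.sup id}
  supIndep := by
    rw [supIndep_iff_pairwiseDisjoint]
    have hdisj : ∀ t ∈ R.parts \ S, Disjoint t (S.sup id) := fun t ht => by
      obtain ⟨htR, htS⟩ := mem_sdiff.1 ht
      exact Finset.disjoint_sup_right.2 fun u hu =>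
        R.disjoint htR (hS hu) (ne_of_mem_of_not_mem hu htS).symm
    rintro x hx y hy hxy
    simp only [coe_union, coe_singleton, Set.mem_union, mem_coe, Set.mem_singleton_iff] at hx hy
    rcases hx with hx | rfl <;> rcases hy with hy | rfl
    · exact R.disjoint (mem_sdiff.1 hx).1 (mem_sdiff.1 hy).1 hxy
    · exact hdisj x hx
    · exact (hdisj y hy).symm
    · exact absurd rfl hxy
  sup_parts := by
    rw [sup_union, sup_singleton, id, ← sup_union, sdiff_union_of_subset hS, R.sup_parts]
  bot_notMem := by
    rw [mem_union, mem_sdiff, mem_singleton]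
    rintro (⟨h, -⟩ | h)
    · exact R.bot_notMem h
    · obtain ⟨s, hs⟩ := hne
      exact R.ne_bot (hS hs) (le_bot_iff.1 (h ▸ le_sup (f := id) hs))

lemma splitStep_mergeParts (R : Finpartition a) {S : Finset α} (hS : S ⊆ R.parts) {h : ℕ}
    (hcard : #S = h) (hh : 1 < h) :
    SplitStep h (R.mergeParts S hS (card_pos.1 (by omega))) R := by
  subst hcard
  refine ⟨S.sup id, mem_union_right _ (mem_singleton_self _), R.ofSubset hS rfl, rfl, ?_⟩
  have hsup : S.sup id ∉ R.parts \ S := fun h => sup_id_notMem_parts hS hh (mem_sdiff.1 h).1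
  change R.parts = (R.parts \ S ∪ {S.sup id}).erase (S.sup id) ∪ S
  rw [erase_union_distrib, erase_singleton, erase_eq_of_notMem hsup, union_empty,
    sdiff_union_of_subset hS]

lemma parts_sdiff_mergeParts (R : Finpartition a) {S : Finset α} (hS : S ⊆ R.parts)
    (hc : 1 < #S) : R.parts \ (R.mergeParts S hS (card_pos.1 (by omega))).parts = S := by
  have hsup := sup_id_notMem_parts hS hc
  ext t
  simp only [mergeParts, mem_sdiff, mem_union, mem_singleton, not_or, not_and, not_not]
  exact ⟨fun ⟨ht, hS', _⟩ => hS' ht, fun ht => ⟨hS ht, fun _ => ht, fun h => hsup (h ▸ hS ht)⟩⟩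

lemma mergeParts_eq_of_splitStep {Q R : Finpartition a} {b : α} (hb : b ∈ Q.parts)
    (P : Finpartition b) (hR : R.parts = Q.parts.erase b ∪ P.parts) (hPR : P.parts ⊆ R.parts)
    (hne : P.parts.Nonempty) : R.mergeParts P.parts hPR hne = Q := by
  ext1
  change R.parts \ P.parts ∪ {P.parts.sup id} = Q.parts
  rw [hR, union_sdiff_cancel_right (disjoint_parts_erase hb P), P.sup_parts, union_comm,
    ← insert_eq, insert_erase hb]

theorem card_splitStep_left (R : Finpartition a) {h : ℕ} (hh : 2 ≤ h) :
    Nat.card {Q : Finpartition a // SplitStep h Q R} = (#R.parts).choose h := by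
  let merge (S : R.parts.powersetCard h) : {Q : Finpartition a // SplitStep h Q R} :=
    have hS := mem_powersetCard.1 S.2
    ⟨R.mergeParts S.1 hS.1 (card_pos.1 (by omega)), splitStep_mergeParts R hS.1 hS.2 hh⟩
  have hinj : Function.Injective merge := fun S T hST => by
    have hS := mem_powersetCard.1 S.2
    have hT := mem_powersetCard.1 T.2
    have := congrArg (fun Q => R.parts \ Q.1.parts) hST
    simp only [merge, parts_sdiff_mergeParts R hS.1 (by omega),
      parts_sdiff_mergeParts R hT.1 (by omega)] at this
    exact Subtype.ext this
  have hsurj : Function.Surjective merge := by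
    rintro ⟨Q, b, hb, P, hP, hR⟩
    have hPR : P.parts ⊆ R.parts := by rw [hR]; exact subset_union_right
    exact ⟨⟨P.parts, mem_powersetCard.2 ⟨hPR, hP⟩⟩,
      Subtype.ext (mergeParts_eq_of_splitStep hb P hR hPR (card_pos.1 (by omega)))⟩
  rw [← Nat.card_congr (Equiv.ofBijective merge ⟨hinj, hsurj⟩), Nat.card_eq_finsetCard,
    card_powersetCard]

-- `n + ∑ j ≤ i, (g j - 1)` is the number of blocks of `β i.succ` for every chain `β`.
theorem card_chainTo_splitStep [Finite (Finpartition a)] {m : ℕ} (g : Fin m → ℕ)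
    (hg : ∀ i, 2 ≤ g i) (n : ℕ) (R : Finpartition a) (hR : #R.parts = n + ∑ i, (g i - 1)) :
    Nat.card (ChainTo (fun i => SplitStep (g i)) R) =
      ∏ i, (n + ∑ j ≤ i, (g j - 1)).choose (g i) := by
  induction m generalizing R with
  | zero => simp [card_chainTo_zero]
  | succ m ih =>
    have hfiber (Q : {Q // SplitStep (g (Fin.last m)) Q R}) :
        Nat.card (ChainTo (fun i : Fin m => SplitStep (g i.castSucc)) Q.1) =
          ∏ i : Fin m, (n + ∑ j ≤ i, (g j.castSucc - 1)).choose (g i.castSucc) := by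
      refine ih _ (fun i => hg _) Q.1 ?_
      have := Q.2.card_parts
      have := hg (Fin.last m)
      rw [Fin.sum_univ_castSucc] at hR
      omega
    have : Fintype {Q // SplitStep (g (Fin.last m)) Q R} := Fintype.ofFinite _
    rw [Nat.card_congr (chainToSuccEquiv _ R), Nat.card_sigma, sum_congr rfl fun Q _ => hfiber Q,
      sum_const, card_univ, ← Nat.card_eq_fintype_card, card_splitStep_left R (hg _),
      Fin.prod_univ_castSucc, smul_eq_mul, mul_comm]
    simp_rw [Fin.sum_Iic_castSucc, show Iic (Fin.last m) = univ from Iic_top, hR]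

end DistribLattice

lemma eq_bot_of_forall_card_eq_one {α : Type*} [DecidableEq α] {s : Finset α}
    {P : Finpartition s} (h : ∀ b ∈ P.parts, #b = 1) : P = ⊥ := by
  have hsub : P.parts ⊆ (⊥ : Finpartition s).parts := fun b hb => by
    obtain ⟨x, rfl⟩ := card_eq_one.1 (h b hb)
    exact mem_bot_iff.2 ⟨x, P.le hb (mem_singleton_self x), rfl⟩
  have hcard : #(⊥ : Finpartition s).parts ≤ #P.parts := by
    rw [card_bot, ← P.sum_card_parts, sum_congr rfl h, card_eq_sum_ones]
  ext1
  exact eq_of_subset_of_card_le hsub hcard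

end Finpartition

/-- Backwards counting: the number of splitting sequences of `{1,…,k}` with
ordered split sizes `(g₁,…,g_m)` equals the product of binomial coefficients
`∏ᵢ C(kᵢ', gᵢ')`, where primes denote reversal of the index order
(`kᵢ' = k_{m-i+1}`, `gᵢ' = g_{m-i+1}`), each backwards step merging `gᵢ'` of
the existing `kᵢ'` blocks into one. -/
theorem card_splitting_sequences_binomial
    (k m : ℕ) (hk : 2 ≤ k)
    (g : Fin m → ℕ) (hg : ∀ i, 2 ≤ g i)
    (hsum : ∑ i, (g i - 1) = k - 1) :
    Nat.card {β : Fin (m + 1) → Finpartition (Finset.univ : Finset (Fin k)) //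
        (β 0).parts = {Finset.univ} ∧
        (∀ b ∈ (β (Fin.last m)).parts, b.card = 1) ∧
        (∀ i : Fin m, ∃ b ∈ (β i.castSucc).parts, ∃ P : Finpartition b,
          P.parts.card = g i ∧
          (β i.succ).parts = ((β i.castSucc).parts.erase b) ∪ P.parts)}
      = ∏ i : Fin m,
          Nat.choose
            (1 + ∑ j ∈ Finset.univ.filter (fun j => j ≤ i.rev), (g j - 1))
            (g i.rev) := by
  have hcard_bot : #(⊥ : Finpartition (univ : Finset (Fin k))).parts = 1 + ∑ i, (g i - 1) := by
    rw [Finpartition.card_bot, card_univ, Fintype.card_fin]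
    omega
  trans Nat.card (ChainTo (fun i => Finpartition.SplitStep (g i))
    (⊥ : Finpartition (univ : Finset (Fin k))))
  · refine Nat.card_congr (Equiv.subtypeEquivRight fun β => ⟨fun ⟨_, hlast, hβ⟩ =>
      ⟨Finpartition.eq_bot_of_forall_card_eq_one hlast, hβ⟩, fun ⟨hlast, hβ⟩ => ⟨?_, ?_, hβ⟩⟩)
    · have hblocks := Finpartition.SplitStep.card_parts_last (fun i => Nat.one_le_of_lt (hg i)) hβ
      rw [hlast, hcard_bot] at hblocks
      exact Finpartition.parts_eq_singleton_of_card_parts_eq_one (by omega)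
    · intro b hb
      obtain ⟨x, -, rfl⟩ := Finpartition.mem_bot_iff.1 (hlast ▸ hb)
      exact card_singleton x
  rw [Finpartition.card_chainTo_splitStep g hg 1 ⊥ hcard_bot]
  simp_rw [filter_ge_eq_Iic]
  exact (Equiv.prod_comp Fin.revPerm fun i => (1 + ∑ j ≤ i, (g j - 1)).choose (g i)).symm
end

section
/- For real α ∈ (1,2) and θ > 0, with f_α(θ) := 1 − (1 + θ^{1−α})^{−1/(α−1)}, the third derivative satisfies −f_α'''(θ) = α / ( θ^2 (1 + θ^{α−1})^{3 + 1/(α−1)} ) · ( (α+1) θ^{2(α−1)} + (2−α) θ^{α−1} ). -/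
open Real Set

/-! With `β = α - 1`, the identity `1 + θ^(-β) = θ^(-β) (1 + θ^β)` collapses the first
derivative to `f'(θ) = -(1 + θ^β)^(-1/β - 1)`. Two more applications of the chain and product
rules give `f'''`, and the claimed form follows by writing every power of `θ` through `θ^β` and
every power of `1 + θ^β` through `(1 + θ^β)^(3 + 1/β)`. -/

lemma iteratedDeriv_succ_eqOn_of_hasDerivAt {f g : ℝ → ℝ} {s : Set ℝ} (hs : IsOpen s)
    (hf : ∀ x ∈ s, HasDerivAt f (g x) x) (n : ℕ) :
    EqOn (iteratedDeriv (n + 1) f) (iteratedDeriv n g) s := by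
  rw [iteratedDeriv_succ']
  exact EqOn.iteratedDeriv_of_isOpen (fun x hx => (hf x hx).deriv) hs n

lemma one_add_rpow_neg_rpow (β r : ℝ) {x : ℝ} (hx : 0 < x) :
    (1 + x ^ (-β)) ^ r = x ^ (-(β * r)) * (1 + x ^ β) ^ r := by
  have h : 1 + x ^ (-β) = x ^ (-β) * (1 + x ^ β) := by
    rw [mul_add, mul_one, ← rpow_add hx, neg_add_cancel, rpow_zero, add_comm]
  rw [h, mul_rpow (by positivity) (by positivity), ← rpow_mul hx.le, neg_mul]

lemma hasDerivAt_one_add_rpow_rpow (β q : ℝ) {x : ℝ} (hx : 0 < x) :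
    HasDerivAt (fun y => (1 + y ^ β) ^ q) (q * (1 + x ^ β) ^ (q - 1) * (β * x ^ (β - 1))) x :=
  (hasDerivAt_rpow_const (Or.inl (by positivity))).comp x
    ((hasDerivAt_rpow_const (Or.inl hx.ne')).const_add 1)

section

variable {β x : ℝ}

lemma hasDerivAt_one_sub_one_add_rpow_neg_rpow (hβ : β ≠ 0) (hx : 0 < x) :
    HasDerivAt (fun y => 1 - (1 + y ^ (-β)) ^ (-(1 / β)))
      (-(1 + x ^ β) ^ (-(1 / β) - 1)) x := by
  refine ((hasDerivAt_one_add_rpow_rpow (-β) (-(1 / β)) hx).const_sub 1).congr_deriv ?_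
  have hexp : -(β * (-(1 / β) - 1)) = β + 1 := by field_simp; ring
  have hpow : x ^ (β + 1) * x ^ (-β - 1) = 1 := by
    rw [← rpow_add hx, show β + 1 + (-β - 1) = 0 by ring, rpow_zero]
  rw [one_add_rpow_neg_rpow β _ hx, hexp]
  linear_combination
    -(x ^ (β + 1) * x ^ (-β - 1) * (1 + x ^ β) ^ (-(1 / β) - 1)) * one_div_mul_cancel hβ
      - (1 + x ^ β) ^ (-(1 / β) - 1) * hpow

lemma hasDerivAt_neg_one_add_rpow_rpow (hβ : β ≠ 0) (hx : 0 < x) :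
    HasDerivAt (fun y => -(1 + y ^ β) ^ (-(1 / β) - 1))
      ((β + 1) * x ^ (β - 1) * (1 + x ^ β) ^ (-(1 / β) - 2)) x := by
  refine (hasDerivAt_one_add_rpow_rpow β (-(1 / β) - 1) hx).neg.congr_deriv ?_
  rw [show -(1 / β) - 1 - 1 = -(1 / β) - 2 by ring]
  field_simp
  ring

lemma hasDerivAt_mul_rpow_mul_one_add_rpow_rpow (hβ : β ≠ 0) (hx : 0 < x) :
    HasDerivAt (fun y => (β + 1) * y ^ (β - 1) * (1 + y ^ β) ^ (-(1 / β) - 2))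
      (-((β + 1) / (x ^ 2 * (1 + x ^ β) ^ (3 + 1 / β)) *
        ((β + 2) * x ^ (2 * β) + (1 - β) * x ^ β))) x := by
  refine (((hasDerivAt_rpow_const (p := β - 1) (Or.inl hx.ne')).const_mul (β + 1)).mul
    (hasDerivAt_one_add_rpow_rpow β (-(1 / β) - 2) hx)).congr_deriv ?_
  have hv : 0 < 1 + x ^ β := by positivity
  have h1 : x ^ (β - 1) = x ^ β / x := rpow_sub_one hx.ne' β
  have h2 : x ^ (β - 1 - 1) = x ^ β / x ^ 2 := by
    rw [sub_sub, rpow_sub hx, one_add_one_eq_two, rpow_two]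
  have h3 : x ^ (2 * β) = (x ^ β) ^ 2 := by rw [mul_comm, rpow_mul hx.le, rpow_two]
  have h4 : (1 + x ^ β) ^ (-(1 / β) - 2) = (1 + x ^ β) / (1 + x ^ β) ^ (3 + 1 / β) := by
    rw [eq_div_iff (by positivity), ← rpow_add hv, show -(1 / β) - 2 + (3 + 1 / β) = 1 by ring,
      rpow_one]
  have h5 : (1 + x ^ β) ^ (-(1 / β) - 2 - 1) = 1 / (1 + x ^ β) ^ (3 + 1 / β) := by
    rw [eq_div_iff (by positivity), ← rpow_add hv,
      show -(1 / β) - 2 - 1 + (3 + 1 / β) = 0 by ring, rpow_zero]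
  rw [h1, h2, h3, h4, h5]
  field_simp
  ring

lemma iteratedDeriv_three_one_sub_one_add_rpow_neg_rpow (hβ : β ≠ 0) (hx : 0 < x) :
    iteratedDeriv 3 (fun y => 1 - (1 + y ^ (-β)) ^ (-(1 / β))) x
      = -((β + 1) / (x ^ 2 * (1 + x ^ β) ^ (3 + 1 / β)) *
          ((β + 2) * x ^ (2 * β) + (1 - β) * x ^ β)) := by
  have hs : IsOpen (Ioi (0 : ℝ)) := isOpen_Ioi
  rw [iteratedDeriv_succ_eqOn_of_hasDerivAt hs
      (fun y hy => hasDerivAt_one_sub_one_add_rpow_neg_rpow hβ hy) 2 hx,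
    iteratedDeriv_succ_eqOn_of_hasDerivAt hs
      (fun y hy => hasDerivAt_neg_one_add_rpow_rpow hβ hy) 1 hx,
    iteratedDeriv_succ_eqOn_of_hasDerivAt hs
      (fun y hy => hasDerivAt_mul_rpow_mul_one_add_rpow_rpow hβ hy) 0 hx,
    iteratedDeriv_zero]

end

/-- For `α ∈ (1,2)` and `θ > 0`, with `f_α(θ) = 1 - (1 + θ^{1-α})^{-1/(α-1)}`:
`-f_α'''(θ) = α / (θ² (1 + θ^{α-1})^{3 + 1/(α-1)}) · ((α+1) θ^{2(α-1)} + (2-α) θ^{α-1})`. -/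
theorem third_deriv_f_alpha
    (α : ℝ) (hα : α ∈ Set.Ioo (1 : ℝ) 2) (θ : ℝ) (hθ : 0 < θ) :
    -iteratedDeriv 3 (fun x : ℝ => 1 - (1 + x ^ (1 - α)) ^ (-(1 / (α - 1)))) θ
      = α / (θ ^ (2 : ℕ) * (1 + θ ^ (α - 1)) ^ (3 + 1 / (α - 1))) *
          ((α + 1) * θ ^ (2 * (α - 1)) + (2 - α) * θ ^ (α - 1)) := by
  have h := iteratedDeriv_three_one_sub_one_add_rpow_neg_rpow (sub_ne_zero.2 hα.1.ne') hθ
  rw [neg_sub] at h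
  rw [h]
  ring
end
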